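/- Let G be the cycle multigraph on n ≥ 4 vertices in which every pair of consecutive vertices is joined by exactly two parallel edges. Then there is no immersion of K_4^2 in G. -/
import Mathlib


/-- A finite hypergraph: a finite vertex set together with a finite multiset of
hyperedges (so multi-hyperedges are allowed), each hyperedge a subset of the vertex set. -/
structure MHypergraph (V : Type) where
  verts : Finset V
  edges : Multiset (Finset V)

/-- The vertex set spanned by a collection (multiset) of hyperedges. -/
def mVerts {V : Type} [DecidableEq V] (S : Multiset (Finset V)) : Finset V :=
  S.toFinset.sup id

/-- Reachability by a Berge path using only hyperedges from `S`. -/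
def mReach {V : Type} (S : Multiset (Finset V)) (u v : V) : Prop :=
  Relation.ReflTransGen (fun a b => ∃ f ∈ S, a ∈ f ∧ b ∈ f) u v

/-- A collection of hyperedges is connected if any two of its vertices are joined
by a Berge path within it. -/
def mConnected {V : Type} [DecidableEq V] (S : Multiset (Finset V)) : Prop :=
  ∀ u ∈ mVerts S, ∀ v ∈ mVerts S, mReach S u v

/-- An immersion of the hypergraph `H` in the hypergraph `G`: an injective map of
vertices together with an assignment (encoded by the multiset `P` of pairs) sending each
hyperedge of `H` to a nonempty connected sub-hypergraph of `G` containing the images of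
its ends, such that distinct hyperedges of `H` are mapped to edge-disjoint sub-hypergraphs
(encoded by requiring that the multiset sum of all images is contained in `G.edges`). -/
def MImmersion {V1 V2 : Type} [DecidableEq V2]
    (H : MHypergraph V1) (G : MHypergraph V2) : Prop :=
  ∃ (vmap : V1 → V2) (P : Multiset (Finset V1 × Multiset (Finset V2))),
    Set.MapsTo vmap ↑H.verts ↑G.verts ∧
    Set.InjOn vmap ↑H.verts ∧
    P.map Prod.fst = H.edges ∧
    (P.map Prod.snd).sum ≤ G.edges ∧
    ∀ p ∈ P, p.2 ≠ 0 ∧ mConnected p.2 ∧ ∀ v ∈ p.1, vmap v ∈ mVerts p.2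

/-- `G'` is a subgraph of `G`: obtained by deleting vertices and/or hyperedges. -/
def IsSubgraph {V : Type} (G' G : MHypergraph V) : Prop :=
  G'.verts ⊆ G.verts ∧ G'.edges ≤ G.edges

/-- Coalescence: merge two hyperedges sharing at least one vertex into their union. -/
def CoalStep {V : Type} [DecidableEq V] (G H : MHypergraph V) : Prop :=
  ∃ (e1 e2 : Finset V) (rest : Multiset (Finset V)),
    (e1 ∩ e2).Nonempty ∧ G.edges = e1 ::ₘ e2 ::ₘ rest ∧
    H.verts = G.verts ∧ H.edges = (e1 ∪ e2) ::ₘ rest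

/-- Dewetting: detach one vertex from a hyperedge of size at least 2. -/
def DewetStep {V : Type} [DecidableEq V] (G H : MHypergraph V) : Prop :=
  ∃ (e : Finset V) (v : V) (rest : Multiset (Finset V)),
    v ∈ e ∧ 2 ≤ e.card ∧ G.edges = e ::ₘ rest ∧
    H.verts = G.verts ∧ H.edges = (e.erase v) ::ₘ rest

/-- Hypergraph isomorphism: a bijection of vertex sets inducing a bijection of
hyperedge multisets. -/
def MIso {V1 V2 : Type} [DecidableEq V2] (G : MHypergraph V1) (H : MHypergraph V2) : Prop :=
  ∃ φ : V1 → V2, Set.BijOn φ ↑G.verts ↑H.verts ∧ H.edges = G.edges.map (Finset.image φ)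

/-- The cycle multigraph on `n` vertices in which each pair of consecutive vertices
(mod `n`) is joined by exactly two parallel edges. -/
def Cyc2 (n : ℕ) (hn : 0 < n) : MHypergraph (Fin n) where
  verts := Finset.univ
  edges :=
    Finset.univ.val.map
      (fun i : Fin n => ({i, ⟨(↑i + 1) % n, Nat.mod_lt _ hn⟩} : Finset (Fin n)))
    + Finset.univ.val.map
      (fun i : Fin n => ({i, ⟨(↑i + 1) % n, Nat.mod_lt _ hn⟩} : Finset (Fin n)))

/-- `K_4^2`: the complete graph on 4 vertices. -/
def K42 : MHypergraph (Fin 4) :=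
  ⟨Finset.univ,
    {({0, 1} : Finset (Fin 4)), {0, 2}, {0, 3}, {1, 2}, {1, 3}, {2, 3}}⟩


namespace Stmt10
variable {n : ℕ}

/-- successor on the cycle -/
def fsucc (i : Fin n) : Fin n :=
  ⟨(i.val + 1) % n, Nat.mod_lt _ (Nat.lt_of_le_of_lt (Nat.zero_le _) i.isLt)⟩

/-- the doubled edge at position `i` -/
def cedge (i : Fin n) : Finset (Fin n) := {i, fsucc i}

/-- clockwise distance -/
def dd (a b : Fin n) : ℕ := if a.val ≤ b.val then b.val - a.val else b.val + n - a.val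

/-- side of the cut `{p,q}` -/
def sideOf (p q x : Fin n) : Prop := dd (fsucc p) x ≤ dd (fsucc p) q

lemma fsucc_val (i : Fin n) : (fsucc i).val = if i.val + 1 = n then 0 else i.val + 1 := by
  have h := i.isLt
  simp only [fsucc]
  split_ifs with h1
  · rw [h1, Nat.mod_self]
  · exact Nat.mod_eq_of_lt (by omega)

lemma step_side (p q i : Fin n) (hip : i ≠ p) (hiq : i ≠ q) :
    (sideOf p q i ↔ sideOf p q (fsucc i)) := by
  have h1 := fsucc_val p; have h2 := fsucc_val i
  have hp := p.isLt; have hq := q.isLt; have hi := i.isLt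
  have hip' : i.val ≠ p.val := fun h => hip (Fin.ext h)
  have hiq' : i.val ≠ q.val := fun h => hiq (Fin.ext h)
  simp only [sideOf, dd, h1, h2]
  split_ifs <;> omega

lemma sep_side (u v p q : Fin n) (h1 : dd u p < dd u v) (h2 : dd v q < dd v u) :
    ¬ (sideOf p q u ↔ sideOf p q v) := by
  have hfp := fsucc_val p
  have hu := u.isLt; have hv := v.isLt; have hp := p.isLt; have hq := q.isLt
  simp only [sideOf, dd, hfp] at *
  split_ifs at * <;> omega

/-- A connected sub-multiset of cycle edges containing `u` and `v` covers one of the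
two arcs between them. -/
lemma coverLemma (S : Multiset (Finset (Fin n)))
    (hsub : ∀ f ∈ S, ∃ i, f = cedge i) (hconn : mConnected S)
    (u v : Fin n) (hu : u ∈ mVerts S) (hv : v ∈ mVerts S) :
    (∀ r, dd u r < dd u v → cedge r ∈ S) ∨ (∀ r, dd v r < dd v u → cedge r ∈ S) := by
  by_cases hL : ∀ r, dd u r < dd u v → cedge r ∈ S
  · exact Or.inl hL
  · right
    push_neg at hL
    obtain ⟨p, hp, hpS⟩ := hL
    intro q hq
    by_contra hqS
    have hside : ∀ a b : Fin n, (∃ f ∈ S, a ∈ f ∧ b ∈ f) → (sideOf p q a ↔ sideOf p q b) := by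
      rintro a b ⟨f, hf, haf, hbf⟩
      obtain ⟨i, rfl⟩ := hsub f hf
      have hip : i ≠ p := fun h => hpS (h ▸ hf)
      have hiq : i ≠ q := fun h => hqS (h ▸ hf)
      have hstep := step_side p q i hip hiq
      simp only [cedge, Finset.mem_insert, Finset.mem_singleton] at haf hbf
      rcases haf with rfl | rfl <;> rcases hbf with rfl | rfl
      · exact Iff.rfl
      · exact hstep
      · exact hstep.symm
      · exact Iff.rfl
    have hiff : ∀ a b : Fin n, mReach S a b → (sideOf p q a ↔ sideOf p q b) := by
      intro a b hab
      induction hab with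
      | refl => exact Iff.rfl
      | tail _ h ih => exact ih.trans (hside _ _ h)
    exact sep_side u v p q hp hq (hiff u v (hconn u hu v hv))

/-- the six vertex pairs of `K₄` -/
def pr : Fin 6 → Fin 4 × Fin 4 := ![(0,1), (1,2), (2,3), (0,3), (0,2), (1,3)]

def covered (b : Bool) (ij : Fin 4 × Fin 4) (k : Fin 4) : Bool :=
  (b && (decide (ij.1 ≤ k) && decide (k < ij.2))) ||
  (!b && (decide (k < ij.1) || decide (ij.2 ≤ k)))

lemma claim : ∀ b : Fin 6 → Bool, ∃ k : Fin 4, ∃ t1 t2 t3 : Fin 6,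
    t1 ≠ t2 ∧ t1 ≠ t3 ∧ t2 ≠ t3 ∧ covered (b t1) (pr t1) k = true ∧
    covered (b t2) (pr t2) k = true ∧ covered (b t3) (pr t3) k = true := by decide

lemma pr_lt : ∀ t : Fin 6, (pr t).1 < (pr t).2 := by decide

lemma pr_pairs_ne : ∀ s t : Fin 6, s ≠ t →
    ({(pr s).1, (pr s).2} : Finset (Fin 4)) ≠ {(pr t).1, (pr t).2} := by decide

lemma cyc2_edges (h0 : 0 < n) :
    (Cyc2 n h0).edges = Finset.univ.val.map cedge + Finset.univ.val.map cedge := rfl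

lemma cedge_inj (hn : 4 ≤ n) : Function.Injective (cedge (n := n)) := by
  intro i j h
  have h1 : i ∈ cedge j := h ▸ Finset.mem_insert_self i _
  have h2 : j ∈ cedge i := h.symm ▸ Finset.mem_insert_self j _
  simp only [cedge, Finset.mem_insert, Finset.mem_singleton] at h1 h2
  have hi := i.isLt; have hj := j.isLt
  have m1 := fsucc_val i; have m2 := fsucc_val j
  rcases h1 with h1 | h1
  · exact h1
  rcases h2 with h2 | h2
  · exact h2.symm
  exfalso
  have e1 : i.val = (fsucc j).val := congrArg Fin.val h1
  have e2 : j.val = (fsucc i).val := congrArg Fin.val h2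
  rw [m2] at e1; rw [m1] at e2
  split_ifs at e1 e2 <;> omega

lemma count_cyc2 (hn : 4 ≤ n) (h0 : 0 < n) (x : Fin n) :
    Multiset.count (cedge x) (Cyc2 n h0).edges = 2 := by
  rw [cyc2_edges, Multiset.count_add,
    Multiset.count_map_eq_count' _ _ (cedge_inj hn),
    Multiset.count_eq_one_of_mem Finset.univ.nodup (Finset.mem_univ x)]

lemma two_mem : ∀ x y : Fin 4, x ≠ y → ({x, y} : Finset (Fin 4)) ∈ K42.edges := by decide

end Stmt10

open Stmt10 in
/-- For `n ≥ 4`, there is no immersion of `K_4^2` in the doubled-edge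
cycle multigraph on `n` vertices. -/
theorem stmt10 (n : ℕ) (hn : 4 ≤ n) : ¬ MImmersion K42 (Cyc2 n (by omega)) := by
  rintro ⟨vmap, P, -, hinj, hfst, hsum, hprop⟩
  classical
  have hvinj : Function.Injective vmap := by
    intro x y h
    exact hinj (by simp [K42]) (by simp [K42]) h
  set T : Finset (Fin n) := Finset.univ.image vmap with hT
  have hTcard : T.card = 4 := by
    rw [hT, Finset.card_image_of_injective _ hvinj, Finset.card_univ, Fintype.card_fin]
  set o := T.orderIsoOfFin hTcard with ho
  set w : Fin 4 → Fin n := fun i => (o i : Fin n) with hwdef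
  have hw : StrictMono w := fun i j hij => by
    simp only [hwdef]
    exact Subtype.coe_lt_coe.2 (o.lt_iff_lt.2 hij)
  have hamem : ∀ i : Fin 4, ∃ x : Fin 4, vmap x = w i := by
    intro i
    have hm : w i ∈ T := (o i).2
    rw [hT, Finset.mem_image] at hm
    obtain ⟨x, -, hx⟩ := hm
    exact ⟨x, hx⟩
  obtain ⟨a, ha⟩ := Classical.axiomOfChoice hamem
  have hainj : Function.Injective a := by
    intro i j h
    apply hw.injective
    rw [← ha, ← ha, h]
  have hpsx : ∀ t : Fin 6, ∃ x, x ∈ P ∧ x.1 = ({a (pr t).1, a (pr t).2} : Finset (Fin 4)) := by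
    intro t
    have hne : a (pr t).1 ≠ a (pr t).2 := fun h => absurd (hainj h) (ne_of_lt (pr_lt t))
    have hm : ({a (pr t).1, a (pr t).2} : Finset (Fin 4)) ∈ Multiset.map Prod.fst P := by
      rw [hfst]; exact two_mem _ _ hne
    obtain ⟨x, hx1, hx2⟩ := Multiset.mem_map.1 hm
    exact ⟨x, hx1, hx2⟩
  obtain ⟨ps, hps⟩ := Classical.axiomOfChoice hpsx
  have hsub : ∀ t : Fin 6, ∀ f ∈ (ps t).2, ∃ i, f = cedge i := by
    intro t f hf
    have h1 : (ps t).2 ≤ (P.map Prod.snd).sum :=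
      Multiset.le_sum_of_mem (Multiset.mem_map_of_mem _ (hps t).1)
    have h2 : f ∈ (Cyc2 n (by omega)).edges :=
      Multiset.mem_of_le hsum (Multiset.mem_of_le h1 hf)
    rw [cyc2_edges] at h2
    rcases Multiset.mem_add.1 h2 with h3 | h3 <;>
      · obtain ⟨i, -, hi⟩ := Multiset.mem_map.1 h3
        exact ⟨i, hi.symm⟩
  have hends : ∀ t : Fin 6, w (pr t).1 ∈ mVerts (ps t).2 ∧ w (pr t).2 ∈ mVerts (ps t).2 := by
    intro t
    obtain ⟨-, -, hv⟩ := hprop (ps t) (hps t).1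
    constructor
    · have h := hv (a (pr t).1) (by rw [(hps t).2]; exact Finset.mem_insert_self _ _)
      rwa [ha] at h
    · have h := hv (a (pr t).2)
        (by rw [(hps t).2]; exact Finset.mem_insert_of_mem (Finset.mem_singleton_self _))
      rwa [ha] at h
  have hconn : ∀ t, mConnected (ps t).2 := fun t => (hprop (ps t) (hps t).1).2.1
  have hdich : ∀ t : Fin 6, ∃ b : Bool,
      (b = true → ∀ r, dd (w (pr t).1) r < dd (w (pr t).1) (w (pr t).2) → cedge r ∈ (ps t).2) ∧
      (b = false → ∀ r, dd (w (pr t).2) r < dd (w (pr t).2) (w (pr t).1) → cedge r ∈ (ps t).2) := by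
    intro t
    rcases coverLemma (ps t).2 (hsub t) (hconn t) _ _ (hends t).1 (hends t).2 with h | h
    · exact ⟨true, fun _ => h, by simp⟩
    · exact ⟨false, by simp, fun _ => h⟩
  obtain ⟨b, hb⟩ := Classical.axiomOfChoice hdich
  obtain ⟨k, t1, t2, t3, h12, h13, h23, hc1, hc2, hc3⟩ := claim b
  have hmain : ∀ t : Fin 6, covered (b t) (pr t) k = true → cedge (w k) ∈ (ps t).2 := by
    intro t hc
    have hlt := pr_lt t
    have hij : (w (pr t).1).val < (w (pr t).2).val := hw hlt
    have hkn := (w k).isLt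
    have hin := (w (pr t).1).isLt
    have hjn := (w (pr t).2).isLt
    cases hbt : b t with
    | true =>
      rw [hbt] at hc
      simp only [covered, Bool.true_and, Bool.not_true, Bool.false_and, Bool.or_false,
        Bool.and_eq_true, decide_eq_true_eq] at hc
      obtain ⟨hik, hkj⟩ := hc
      apply (hb t).1 hbt
      have h1 : (w (pr t).1).val ≤ (w k).val := hw.monotone hik
      have h2 : (w k).val < (w (pr t).2).val := hw hkj
      simp only [dd]; split_ifs <;> omega
    | false =>
      rw [hbt] at hc
      simp only [covered, Bool.false_and, Bool.not_false, Bool.true_and, Bool.false_or,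
        Bool.or_eq_true, decide_eq_true_eq] at hc
      apply (hb t).2 hbt
      rcases hc with h | h
      · have h1 : (w k).val < (w (pr t).1).val := hw h
        simp only [dd]; split_ifs <;> omega
      · have h1 : (w (pr t).2).val ≤ (w k).val := hw.monotone h
        simp only [dd]; split_ifs <;> omega
  have hne : ∀ s t : Fin 6, s ≠ t → ps s ≠ ps t := by
    intro s t hst h
    apply pr_pairs_ne s t hst
    have heq : ({a (pr s).1, a (pr s).2} : Finset (Fin 4)) = {a (pr t).1, a (pr t).2} := by
      rw [← (hps s).2, ← (hps t).2, h]
    have himg : Finset.image a {(pr s).1, (pr s).2} = Finset.image a {(pr t).1, (pr t).2} := by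
      simpa [Finset.image_insert, Finset.image_singleton] using heq
    exact Finset.image_injective hainj himg
  have hm2 : ps t2 ∈ P.erase (ps t1) :=
    (Multiset.mem_erase_of_ne (hne t2 t1 (Ne.symm h12))).2 (hps t2).1
  have hm3 : ps t3 ∈ (P.erase (ps t1)).erase (ps t2) :=
    (Multiset.mem_erase_of_ne (hne t3 t2 (Ne.symm h23))).2
      ((Multiset.mem_erase_of_ne (hne t3 t1 (Ne.symm h13))).2 (hps t3).1)
  have hrw1 : P = ps t1 ::ₘ P.erase (ps t1) := (Multiset.cons_erase (hps t1).1).symm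
  have hrw2 : P.erase (ps t1) = ps t2 ::ₘ (P.erase (ps t1)).erase (ps t2) :=
    (Multiset.cons_erase hm2).symm
  have hrw3 : (P.erase (ps t1)).erase (ps t2) =
      ps t3 ::ₘ ((P.erase (ps t1)).erase (ps t2)).erase (ps t3) :=
    (Multiset.cons_erase hm3).symm
  have hcount : 3 ≤ Multiset.count (cedge (w k)) ((P.map Prod.snd).sum) := by
    conv_lhs => skip
    rw [hrw1, hrw2, hrw3]
    simp only [Multiset.map_cons, Multiset.sum_cons, Multiset.count_add]
    have c1 : 1 ≤ Multiset.count (cedge (w k)) (ps t1).2 :=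
      Multiset.one_le_count_iff_mem.2 (hmain t1 hc1)
    have c2 : 1 ≤ Multiset.count (cedge (w k)) (ps t2).2 :=
      Multiset.one_le_count_iff_mem.2 (hmain t2 hc2)
    have c3 : 1 ≤ Multiset.count (cedge (w k)) (ps t3).2 :=
      Multiset.one_le_count_iff_mem.2 (hmain t3 hc3)
    omega
  have hle := Multiset.count_le_of_le (cedge (w k)) hsum
  rw [count_cyc2 hn] at hle
  omega
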